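/- Let p be a cubic polynomial in n variables with Hessian ∇²p(x) = A_0 + x_1·A_1 + ... + x_n·A_n for symmetric matrices A_i. Then p is convex on the nonnegative orthant if and only if p is cop-SOS convex, i.e., there exist matrices P_0, ..., P_n with ∇²p(x) = P_0P_0ᵀ + x_1·P_1P_1ᵀ + ... + x_n·P_nP_nᵀ. -/

import Mathlib

/-!
Restricted to a line `t ↦ x + t • v`, the cubic `p` becomes a cubic `Q` in `t` with
`Q''(t) = vᵀ ∇²p(x + t • v) v`. For a cubic, `Q(h) + Q(-h) - 2 Q(0) = h² Q''(0)` and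
`(1 - b) Q(0) + b Q(1) - Q(b) = b (1 - b) / 2 · Q''((1 + b) / 3)`, so `p` is convex on a convex
set exactly when its Hessian is positive semidefinite there (at interior points for the forward
direction). On the open orthant the pencil `A₀ + ∑ xₗ Aₗ` is positive semidefinite only if each
coefficient is (let `x → 0`, resp. `xₗ → ∞`), and a positive semidefinite matrix is `P Pᵀ`.
-/

open MvPolynomial Matrix

namespace MvPolynomial

variable {σ R : Type*} [CommSemiring R]

theorem derivative_aeval [DecidableEq σ] [Fintype σ] (s : σ → Polynomial R) (p : MvPolynomial σ R) :
    Polynomial.derivative (aeval s p) =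
      ∑ i, Polynomial.derivative (s i) * aeval s (pderiv i p) := by
  induction p using MvPolynomial.induction_on with
  | C a => simp
  | add p q hp hq => simp [hp, hq, Finset.sum_add_distrib, mul_add]
  | mul_X p i hp =>
    simp only [map_mul, aeval_X, Polynomial.derivative_mul, hp, pderiv_mul, pderiv_X, map_add,
      Pi.single_apply, apply_ite (aeval s), map_zero, mul_ite, mul_one, mul_zero, mul_add,
      Finset.sum_add_distrib, Finset.sum_ite_eq, Finset.mem_univ, if_true, Finset.sum_mul,
      mul_assoc]
    rw [mul_comm (aeval s p), add_comm]

theorem natDegree_aeval_le {s : σ → Polynomial R} (hs : ∀ i, (s i).natDegree ≤ 1)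
    (p : MvPolynomial σ R) : (aeval s p).natDegree ≤ p.totalDegree := by
  rw [aeval_def, eval₂_eq]
  refine Polynomial.natDegree_sum_le_of_forall_le _ _ fun d hd => ?_
  refine (Polynomial.natDegree_C_mul_le _ _).trans ?_
  refine (Polynomial.natDegree_prod_le _ _).trans (le_trans ?_ (le_totalDegree hd))
  exact Finset.sum_le_sum fun i _ =>
    (Polynomial.natDegree_pow_le_of_le _ (hs i)).trans_eq (mul_one _)

noncomputable def lineRestriction (p : MvPolynomial σ R) (x v : σ → R) : Polynomial R :=
  aeval (fun i => Polynomial.C (v i) * Polynomial.X + Polynomial.C (x i)) p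

noncomputable def hessian [DecidableEq σ] (p : MvPolynomial σ R) (x : σ → R) : Matrix σ σ R :=
  Matrix.of fun i j => eval x (pderiv i (pderiv j p))

theorem eval_lineRestriction (p : MvPolynomial σ R) (x v : σ → R) (t : R) :
    (lineRestriction p x v).eval t = eval (x + t • v) p := by
  rw [lineRestriction, ← Polynomial.coe_aeval_eq_eval, ← AlgHom.comp_apply, comp_aeval,
    aeval_eq_eval]
  congr 2 with i
  simp only [Polynomial.coe_aeval_eq_eval, Polynomial.eval_add, Polynomial.eval_mul,
    Polynomial.eval_C, Polynomial.eval_X, Pi.add_apply, Pi.smul_apply, smul_eq_mul]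
  ring

theorem natDegree_lineRestriction_le (p : MvPolynomial σ R) (x v : σ → R) :
    (lineRestriction p x v).natDegree ≤ p.totalDegree :=
  natDegree_aeval_le (fun _ => Polynomial.natDegree_linear_le) p

theorem derivative_lineRestriction [Fintype σ] [DecidableEq σ] (p : MvPolynomial σ R)
    (x v : σ → R) :
    Polynomial.derivative (lineRestriction p x v)
      = ∑ i, Polynomial.C (v i) * lineRestriction (pderiv i p) x v := by
  simp [lineRestriction, derivative_aeval]

theorem eval_derivative_derivative_lineRestriction [Fintype σ] [DecidableEq σ]
    (p : MvPolynomial σ R) (x v : σ → R) (t : R) :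
    (Polynomial.derivative (Polynomial.derivative (lineRestriction p x v))).eval t
      = v ⬝ᵥ hessian p (x + t • v) *ᵥ v := by
  simp only [derivative_lineRestriction, map_sum, Polynomial.derivative_C_mul, Finset.mul_sum,
    Polynomial.eval_finsetSum, Polynomial.eval_mul, Polynomial.eval_C, eval_lineRestriction,
    hessian, dotProduct, mulVec, Matrix.of_apply]
  rw [Finset.sum_comm]
  exact Finset.sum_congr rfl fun i _ => Finset.sum_congr rfl fun j _ => by ring

end MvPolynomial

namespace Polynomial

theorem natDegree_derivative_derivative_lt_two {K : Type*} [Semiring K] {Q : K[X]}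
    (hQ : Q.natDegree ≤ 3) : (derivative (derivative Q)).natDegree < 2 := by
  have := natDegree_derivative_le Q
  have := natDegree_derivative_le (derivative Q)
  omega

theorem eval_add_eval_neg_sub_of_natDegree_le_three {K : Type*} [CommRing K] {Q : K[X]}
    (hQ : Q.natDegree ≤ 3) (h : K) :
    Q.eval h + Q.eval (-h) - 2 * Q.eval 0 = h ^ 2 * (derivative (derivative Q)).eval 0 := by
  have hQ4 : Q.natDegree < 4 := by omega
  simp only [eval_eq_sum_range' hQ4, eval_eq_sum_range' (natDegree_derivative_derivative_lt_two hQ),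
    Finset.sum_range_succ, Finset.sum_range_zero, coeff_derivative]
  push_cast
  ring

theorem jensen_gap_of_natDegree_le_three {K : Type*} [Field K] [CharZero K] {Q : K[X]}
    (hQ : Q.natDegree ≤ 3) (b : K) :
    (1 - b) * Q.eval 0 + b * Q.eval 1 - Q.eval b
      = b * (1 - b) / 2 * (derivative (derivative Q)).eval ((1 + b) / 3) := by
  have hQ4 : Q.natDegree < 4 := by omega
  simp only [eval_eq_sum_range' hQ4, eval_eq_sum_range' (natDegree_derivative_derivative_lt_two hQ),
    Finset.sum_range_succ, Finset.sum_range_zero, coeff_derivative]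
  push_cast
  ring

end Polynomial

theorem nonneg_of_forall_pos_add_mul {c b : ℝ} (h : ∀ t > 0, 0 ≤ c + t * b) : 0 ≤ c ∧ 0 ≤ b := by
  have key : ∀ {c b : ℝ}, (∀ t > 0, 0 ≤ c + t * b) → 0 ≤ c := fun h =>
    ge_of_tendsto ((Continuous.tendsto' (by fun_prop) 0 _ (by simp)).mono_left
      (nhdsWithin_le_nhds (s := Set.Ioi 0))) (eventually_nhdsWithin_of_forall h)
  refine ⟨key h, key (b := c) fun t ht => ?_⟩
  have := mul_nonneg ht.le (h t⁻¹ (inv_pos.mpr ht))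
  rwa [mul_add, ← mul_assoc, mul_inv_cancel₀ ht.ne', one_mul, add_comm] at this

theorem nonneg_of_forall_pos_add_sum_mul {ι : Type*} [Fintype ι] [DecidableEq ι] {a : ℝ}
    {b : ι → ℝ}
    (h : ∀ x : ι → ℝ, (∀ i, 0 < x i) → 0 ≤ a + ∑ i, x i * b i) : 0 ≤ a ∧ ∀ i, 0 ≤ b i := by
  refine ⟨(nonneg_of_forall_pos_add_mul (b := ∑ i, b i) fun t ht => ?_).1, fun l =>
    (nonneg_of_forall_pos_add_mul (c := a + ∑ i, b i) fun t ht => ?_).2⟩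
  · simpa [Finset.mul_sum] using h (fun _ => t) fun _ => ht
  · convert h (1 + Pi.single l t) fun i => ?_ using 1
    · simp only [Pi.add_apply, Pi.one_apply, Pi.single_apply, add_mul, one_mul, ite_mul, zero_mul,
        Finset.sum_add_distrib, Finset.sum_ite_eq', Finset.mem_univ, ↓reduceIte]
      ring
    · rcases eq_or_ne i l with rfl | hi <;> simp [*, add_pos]

theorem pos_mem_interior_nonneg_orthant {ι : Type*} [Finite ι] {x : ι → ℝ} (hx : ∀ i, 0 < x i) :
    x ∈ interior {y : ι → ℝ | ∀ i, 0 ≤ y i} := by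
  have hopen : IsOpen {y : ι → ℝ | ∀ i, 0 < y i} := by
    simpa only [Set.ofPred_forall] using isOpen_iInter_of_finite fun i =>
      isOpen_lt continuous_const (continuous_apply i)
  exact interior_maximal (fun y hy i => (hy i).le) hopen hx

namespace Matrix

open scoped MatrixOrder in
theorem PosSemidef.exists_eq_mul_transpose {n : Type*} [Fintype n]
    {M : Matrix n n ℝ} (hM : M.PosSemidef) : ∃ P : Matrix n n ℝ, M = P * Pᵀ := by
  classical
  obtain ⟨a, rfl⟩ := CStarAlgebra.nonneg_iff_eq_star_mul_self.mp hM.nonneg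
  exact ⟨aᵀ, by simp [star_eq_conjTranspose, conjTranspose_eq_transpose_of_trivial]⟩

theorem posSemidef_self_mul_transpose {m n : Type*} [Fintype m] [Fintype n] (P : Matrix m n ℝ) :
    (P * Pᵀ).PosSemidef := by
  simpa [conjTranspose_eq_transpose_of_trivial] using posSemidef_self_mul_conjTranspose P

theorem dotProduct_mulVec_add_sum_smul {ι n : Type*} [Fintype ι] [Fintype n] (M0 : Matrix n n ℝ)
    (M : ι → Matrix n n ℝ) (x : ι → ℝ) (v : n → ℝ) :
    v ⬝ᵥ (M0 + ∑ l, x l • M l) *ᵥ v = v ⬝ᵥ M0 *ᵥ v + ∑ l, x l * (v ⬝ᵥ M l *ᵥ v) := by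
  simp [add_mulVec, sum_mulVec, smul_mulVec, dotProduct_smul, dotProduct_add, dotProduct_sum]

theorem posSemidef_coeffs_of_dotProduct_mulVec_nonneg {ι n : Type*} [Fintype ι] [DecidableEq ι]
    [Fintype n] {M0 : Matrix n n ℝ} {M : ι → Matrix n n ℝ} (hM0 : M0.IsSymm)
    (hM : ∀ l, (M l).IsSymm)
    (h : ∀ x : ι → ℝ, (∀ i, 0 < x i) → ∀ v, 0 ≤ v ⬝ᵥ (M0 + ∑ l, x l • M l) *ᵥ v) :
    M0.PosSemidef ∧ ∀ l, (M l).PosSemidef := by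
  have hcoeffs := fun v => nonneg_of_forall_pos_add_sum_mul fun x hx => by
    simpa only [dotProduct_mulVec_add_sum_smul] using h x hx v
  exact ⟨.of_dotProduct_mulVec_nonneg (isHermitian_iff_isSelfAdjoint.mpr hM0) fun v => by
      simpa using (hcoeffs v).1,
    fun l => .of_dotProduct_mulVec_nonneg (isHermitian_iff_isSelfAdjoint.mpr (hM l)) fun v => by
      simpa using (hcoeffs v).2 l⟩

end Matrix

namespace MvPolynomial

open Filter Topology

variable {σ : Type*} [Fintype σ] [DecidableEq σ] {p : MvPolynomial σ ℝ}

theorem convexOn_of_hessian_nonneg (hp : p.totalDegree ≤ 3) {S : Set (σ → ℝ)} (hS : Convex ℝ S)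
    (hH : ∀ y ∈ S, ∀ v, 0 ≤ v ⬝ᵥ hessian p y *ᵥ v) : ConvexOn ℝ S (fun x => eval x p) := by
  refine ⟨hS, fun x hx y hy a b ha hb hab => ?_⟩
  obtain rfl : a = 1 - b := eq_sub_of_add_eq hab
  have hgap := Polynomial.jensen_gap_of_natDegree_le_three
    ((natDegree_lineRestriction_le p x (y - x)).trans hp) b
  simp only [eval_lineRestriction, eval_derivative_derivative_lineRestriction, zero_smul, add_zero,
    one_smul, add_sub_cancel] at hgap
  have hmem : x + ((1 + b) / 3) • (y - x) ∈ S :=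
    hS.add_smul_sub_mem hx hy ⟨by linarith, by linarith⟩
  have hcomb : x + b • (y - x) = (1 - b) • x + b • y := by module
  have := mul_nonneg (by nlinarith : 0 ≤ b * (1 - b) / 2) (hH _ hmem (y - x))
  simp only [smul_eq_mul, ← hcomb]
  linarith

theorem hessian_nonneg_of_convexOn (hp : p.totalDegree ≤ 3) {S : Set (σ → ℝ)}
    (hf : ConvexOn ℝ S (fun x => eval x p)) {x : σ → ℝ} (hx : x ∈ interior S) (v : σ → ℝ) :
    0 ≤ v ⬝ᵥ hessian p x *ᵥ v := by
  have hnear : ∀ w : σ → ℝ, ∀ᶠ h in 𝓝[≠] (0 : ℝ), x + h • w ∈ S := fun w =>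
    nhdsWithin_le_nhds <| (Continuous.tendsto' (by fun_prop) 0 x (by simp)).eventually
      (mem_interior_iff_mem_nhds.mp hx)
  obtain ⟨h, ⟨hplus, hminus⟩, hh⟩ :=
    ((hnear v).and (hnear (-v))).and self_mem_nhdsWithin |>.exists
  have hmid := hf.2 hplus hminus (by norm_num : (0 : ℝ) ≤ 1 / 2) (by norm_num : (0 : ℝ) ≤ 1 / 2)
    (by norm_num)
  have hsecond := Polynomial.eval_add_eval_neg_sub_of_natDegree_le_three
    ((natDegree_lineRestriction_le p x v).trans hp) h
  simp only [eval_lineRestriction, eval_derivative_derivative_lineRestriction, zero_smul, add_zero,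
    neg_smul, ← smul_neg] at hsecond
  have hx_mid : (1 / 2 : ℝ) • (x + h • v) + (1 / 2 : ℝ) • (x + h • -v) = x := by module
  simp only [hx_mid, smul_eq_mul] at hmid
  refine nonneg_of_mul_nonneg_right ?_ (sq_pos_of_ne_zero hh)
  linarith

end MvPolynomial

/-- For a cubic polynomial `p` whose Hessian is the affine matrix polynomial
`A₀ + x₁A₁ + ⋯ + x_nA_n` with the `Aᵢ` symmetric, `p` is convex on the
nonnegative orthant iff it is cop-SOS convex with constant matrices, i.e.,
`∇²p(x) = P₀P₀ᵀ + ∑ᵢ xᵢ·PᵢPᵢᵀ`. -/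
theorem stmt6 (n : ℕ) (p : MvPolynomial (Fin n) ℝ)
    (hdeg : p.totalDegree ≤ 3)
    (A0 : Matrix (Fin n) (Fin n) ℝ) (A : Fin n → Matrix (Fin n) (Fin n) ℝ)
    (hA0 : A0.IsSymm) (hA : ∀ l, (A l).IsSymm)
    (hHess : ∀ (x : Fin n → ℝ) (i j : Fin n),
      eval x (pderiv i (pderiv j p)) = (A0 + ∑ l, x l • A l) i j) :
    ConvexOn ℝ {x : Fin n → ℝ | ∀ j, 0 ≤ x j} (fun x => eval x p) ↔
      ∃ (P0 : Matrix (Fin n) (Fin n) ℝ) (P : Fin n → Matrix (Fin n) (Fin n) ℝ),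
        ∀ (x : Fin n → ℝ) (i j : Fin n),
          eval x (pderiv i (pderiv j p)) =
            (P0 * P0ᵀ + ∑ l, x l • (P l * (P l)ᵀ)) i j := by
  constructor
  · intro hconv
    obtain ⟨hA0psd, hApsd⟩ := posSemidef_coeffs_of_dotProduct_mulVec_nonneg hA0 hA fun x hx v => by
      rw [← show hessian p x = _ from Matrix.ext (hHess x)]
      exact hessian_nonneg_of_convexOn hdeg hconv (pos_mem_interior_nonneg_orthant hx) v
    obtain ⟨P0, rfl⟩ := hA0psd.exists_eq_mul_transpose
    choose P hP using fun l => (hApsd l).exists_eq_mul_transpose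
    obtain rfl : A = fun l => P l * (P l)ᵀ := funext hP
    exact ⟨P0, P, hHess⟩
  · rintro ⟨P0, P, hP⟩
    refine convexOn_of_hessian_nonneg hdeg (convex_Ici 0) fun y hy v => ?_
    rw [show hessian p y = _ from Matrix.ext (hP y)]
    simpa using ((posSemidef_self_mul_transpose P0).add (posSemidef_sum _ fun l _ =>
      (posSemidef_self_mul_transpose (P l)).smul (hy l))).dotProduct_mulVec_nonneg v
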